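/- Let ε ∈ ℝ and k₂ < 0. On any open interval I containing 0 contained in (−1/√(−k₂), 1/√(−k₂)) on which the expression 1 + ε( s√(1 + k₂ s²) + arcsin(√(−k₂) s)/√(−k₂) ) is positive, the function φ(s) := √( 1 + ε( s√(1 + k₂ s²) + arcsin(√(−k₂) s)/√(−k₂) ) ) satisfies equation (E) with parameters (k₁, k₂, k₃) = (0, k₂, 0), i.e. s k₂ (φφ' − s φ'² − s φφ'') − (φ'² + φφ'') = 0 on I; moreover φ(0) = 1 and φ'(0) = ε. -/

import Mathlib

/-!
For `k₁ = k₃ = 0`, equation (E) reads `k₂ s φφ' − (1 + k₂ s²)(φ'² + φφ'') = 0`, which in terms of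
`ψ = φ²` is the linear equation `(1 + k₂ s²) ψ'' = k₂ s ψ'`. It is solved by every `ψ` with
`ψ' = C √(1 + k₂ s²)`, since `q = √(1 + k₂ s²)` satisfies `q² q' = k₂ s q`. The radicand
`1 + ε (s √(1 + k₂ s²) + arcsin(√(−k₂) s)/√(−k₂))` is an antiderivative of `2ε √(1 + k₂ s²)`.
-/

open Filter Topology

/-- Equation (E) with parameters `k₁ k₂ k₃` for a real function `φ` at the point `s`:
`s(k₂ − k₃ s²)(φφ' − s φ'² − s φφ'') − (φ'² + φφ'') + k₁ φ(φ − s φ') = 0`. -/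
def eqE (k₁ k₂ k₃ : ℝ) (φ : ℝ → ℝ) (s : ℝ) : Prop :=
  s * (k₂ - k₃ * s ^ 2) *
      (φ s * deriv φ s - s * (deriv φ s) ^ 2 - s * φ s * deriv (deriv φ) s) -
    ((deriv φ s) ^ 2 + φ s * deriv (deriv φ) s) +
    k₁ * φ s * (φ s - s * deriv φ s) = 0

lemma eqE_zero_zero_iff (k : ℝ) (φ : ℝ → ℝ) (s : ℝ) :
    eqE 0 k 0 φ s ↔
      (1 + k * s ^ 2) * (deriv φ s ^ 2 + φ s * deriv (deriv φ) s) = k * s * (φ s * deriv φ s) := by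
  unfold eqE
  constructor <;> intro h <;> linear_combination -h

section SqrtComp

variable {g g' : ℝ → ℝ} {g'' s : ℝ}

lemma eventuallyEq_deriv_sqrt_comp (hg : ∀ᶠ t in 𝓝 s, HasDerivAt g (g' t) t) (hpos : 0 < g s) :
    deriv (fun t => √(g t)) =ᶠ[𝓝 s] fun t => g' t / (2 * √(g t)) := by
  have hpos_ev : ∀ᶠ t in 𝓝 s, 0 < g t :=
    continuousAt_const.eventually_lt hg.self_of_nhds.continuousAt hpos
  filter_upwards [hg, hpos_ev] with t hgt hgt_pos
  exact (hgt.sqrt hgt_pos.ne').deriv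

lemma sqrt_comp_mul_deriv (hg : ∀ᶠ t in 𝓝 s, HasDerivAt g (g' t) t) (hpos : 0 < g s) :
    √(g s) * deriv (fun t => √(g t)) s = g' s / 2 := by
  rw [(eventuallyEq_deriv_sqrt_comp hg hpos).eq_of_nhds]
  field_simp

/-- For `φ = √g` this is `(φ²)'' = 2 (φ'² + φ φ'')`. -/
lemma deriv_sqrt_comp_sq_add_mul_deriv_deriv (hg : ∀ᶠ t in 𝓝 s, HasDerivAt g (g' t) t)
    (hg' : HasDerivAt g' g'' s) (hpos : 0 < g s) :
    deriv (fun t => √(g t)) s ^ 2 + √(g s) * deriv (deriv fun t => √(g t)) s = g'' / 2 := by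
  have hsqrt_pos : 0 < √(g s) := Real.sqrt_pos.2 hpos
  have hsecond : HasDerivAt (fun t => g' t / (2 * √(g t)))
      ((g'' * (2 * √(g s)) - g' s * (2 * (g' s / (2 * √(g s))))) / (2 * √(g s)) ^ 2) s :=
    hg'.div ((hg.self_of_nhds.sqrt hpos.ne').const_mul 2) (by positivity)
  rw [(eventuallyEq_deriv_sqrt_comp hg hpos).deriv_eq, hsecond.deriv,
    (eventuallyEq_deriv_sqrt_comp hg hpos).eq_of_nhds]
  field_simp
  rw [Real.sq_sqrt hpos.le]
  ring

end SqrtComp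

lemma one_add_mul_sq_pos {k s : ℝ} (hk : k < 0) (hs : s ∈ Set.Ioo (-(1 / √(-k))) (1 / √(-k))) :
    0 < 1 + k * s ^ 2 := by
  have hsq : s ^ 2 < 1 / -k := by
    calc s ^ 2 < (1 / √(-k)) ^ 2 := sq_lt_sq' hs.1 hs.2
      _ = 1 / -k := by rw [div_pow, one_pow, Real.sq_sqrt (neg_nonneg.2 hk.le)]
  rw [lt_div_iff₀ (neg_pos.2 hk)] at hsq
  linarith

lemma hasDerivAt_sqrt_one_add_mul_sq {k s : ℝ} (hs : 0 < 1 + k * s ^ 2) :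
    HasDerivAt (fun t => √(1 + k * t ^ 2)) (k * s / √(1 + k * s ^ 2)) s := by
  have hinner : HasDerivAt (fun t => 1 + k * t ^ 2) (k * (2 * s)) s := by
    simpa using ((hasDerivAt_pow 2 s).const_mul k).const_add 1
  convert hinner.sqrt hs.ne' using 1
  ring

lemma hasDerivAt_mul_sqrt_add_arcsin {k s : ℝ} (hk : k < 0) (hs : 0 < 1 + k * s ^ 2) :
    HasDerivAt (fun t => t * √(1 + k * t ^ 2) + Real.arcsin (√(-k) * t) / √(-k))
      (2 * √(1 + k * s ^ 2)) s := by
  set c := √(-k)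
  have hc : 0 < c := Real.sqrt_pos.2 (neg_pos.2 hk)
  have hc2 : c ^ 2 = -k := Real.sq_sqrt (neg_nonneg.2 hk.le)
  have hcs : (c * s) ^ 2 < 1 := by rw [mul_pow, hc2]; linarith
  have hcs₁ : c * s ≠ -1 := by intro h; rw [h] at hcs; norm_num at hcs
  have hcs₂ : c * s ≠ 1 := by intro h; rw [h] at hcs; norm_num at hcs
  have harcsin : HasDerivAt (fun t => Real.arcsin (c * t)) (1 / √(1 - (c * s) ^ 2) * c) s :=
    (Real.hasDerivAt_arcsin hcs₁ hcs₂).comp s (hasDerivAt_const_mul c)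
  have hradicand : 1 - (c * s) ^ 2 = 1 + k * s ^ 2 := by linear_combination (-s ^ 2) * hc2
  rw [hradicand] at harcsin
  refine (((hasDerivAt_id' s).mul (hasDerivAt_sqrt_one_add_mul_sq hs)).add
    (harcsin.div_const c)).congr_deriv ?_
  field_simp
  linear_combination -Real.sq_sqrt hs.le

theorem stmt13 (ε k₂ : ℝ) (hk₂ : k₂ < 0) (a b : ℝ) (ha : a < 0) (hb : 0 < b)
    (hsub : Set.Ioo a b ⊆ Set.Ioo (-(1 / Real.sqrt (-k₂))) (1 / Real.sqrt (-k₂)))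
    (hpos : ∀ s ∈ Set.Ioo a b,
      0 < 1 + ε * (s * Real.sqrt (1 + k₂ * s ^ 2) +
        Real.arcsin (Real.sqrt (-k₂) * s) / Real.sqrt (-k₂))) :
    (∀ s ∈ Set.Ioo a b,
      eqE 0 k₂ 0
        (fun t => Real.sqrt (1 + ε * (t * Real.sqrt (1 + k₂ * t ^ 2) +
          Real.arcsin (Real.sqrt (-k₂) * t) / Real.sqrt (-k₂)))) s) ∧
    (fun t => Real.sqrt (1 + ε * (t * Real.sqrt (1 + k₂ * t ^ 2) +
      Real.arcsin (Real.sqrt (-k₂) * t) / Real.sqrt (-k₂)))) 0 = 1 ∧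
    deriv (fun t => Real.sqrt (1 + ε * (t * Real.sqrt (1 + k₂ * t ^ 2) +
      Real.arcsin (Real.sqrt (-k₂) * t) / Real.sqrt (-k₂)))) 0 = ε := by
  set g : ℝ → ℝ := fun t => 1 + ε * (t * √(1 + k₂ * t ^ 2) + Real.arcsin (√(-k₂) * t) / √(-k₂))
  have hdom : ∀ s ∈ Set.Ioo a b, 0 < 1 + k₂ * s ^ 2 := fun s hs => one_add_mul_sq_pos hk₂ (hsub hs)
  have hg : ∀ s ∈ Set.Ioo a b, ∀ᶠ t in 𝓝 s, HasDerivAt g (ε * (2 * √(1 + k₂ * t ^ 2))) t :=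
    fun s hs => eventually_of_mem (isOpen_Ioo.mem_nhds hs) fun t ht =>
      ((hasDerivAt_mul_sqrt_add_arcsin hk₂ (hdom t ht)).const_mul ε).const_add 1
  have hg0 : g 0 = 1 := by simp [g]
  refine ⟨fun s hs => ?_, by simp, ?_⟩
  · have hq : 0 < √(1 + k₂ * s ^ 2) := Real.sqrt_pos.2 (hdom s hs)
    rw [eqE_zero_zero_iff, deriv_sqrt_comp_sq_add_mul_deriv_deriv (hg s hs)
      (((hasDerivAt_sqrt_one_add_mul_sq (hdom s hs)).const_mul 2).const_mul ε) (hpos s hs),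
      sqrt_comp_mul_deriv (hg s hs) (hpos s hs)]
    field_simp
    linear_combination -(k₂ * s * ε) * Real.sq_sqrt (hdom s hs).le
  · simpa [hg0] using sqrt_comp_mul_deriv (hg 0 ⟨ha, hb⟩) (hpos 0 ⟨ha, hb⟩)
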